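/- arXiv:2007.08726 — 2 statements merged into one kernel-verified Lean document; each statement's English description precedes it below -/
import Mathlib

section
/- In a metric transportation game with n players, for any outcome σ and any outcome σ* minimizing the utilitarian social cost U, it holds that U(σ) ≤ (2n−1)·U(σ*). -/
open Finset

/-- Length of a bus route that visits the points of `l` in order and then ends at the
destination `t` (the initial segment from the depot is ignored). -/
noncomputable def routeLen {V : Type*} [PseudoMetricSpace V] (t : V) (l : List V) : ℝ :=
  ∑ i ∈ Finset.range l.length, dist (l.getD i t) (l.getD (i + 1) t)

/-- The route of bus `j` under outcome `σ`: the players that chose bus `j`, in the order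
given by the fixed permutation list `ord j` of bus `j`. -/
def busRoute {n m : ℕ} (ord : Fin m → List (Fin n)) (σ : Fin n → Fin m) (j : Fin m) :
    List (Fin n) :=
  (ord j).filter (fun i => decide (σ i = j))

/-- `ord` gives, for every bus, a permutation of all the players. -/
def validOrd {n m : ℕ} (ord : Fin m → List (Fin n)) : Prop :=
  ∀ j : Fin m, (ord j).Nodup ∧ ∀ i : Fin n, i ∈ ord j

/-- The cost of player `i` under outcome `σ`: the distance traveled by `i`'s bus from the
location of `i` to the destination `t`. -/
noncomputable def playerCost {V : Type*} [PseudoMetricSpace V] {n m : ℕ}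
    (x : Fin n → V) (t : V) (ord : Fin m → List (Fin n)) (σ : Fin n → Fin m)
    (i : Fin n) : ℝ :=
  routeLen t
    (((busRoute ord σ (σ i)).drop ((busRoute ord σ (σ i)).idxOf i)).map x)

/-- The utilitarian social cost: the sum of the costs of all players. -/
noncomputable def socialU {V : Type*} [PseudoMetricSpace V] {n m : ℕ}
    (x : Fin n → V) (t : V) (ord : Fin m → List (Fin n)) (σ : Fin n → Fin m) : ℝ :=
  ∑ i : Fin n, playerCost x t ord σ i

/-- The egalitarian social cost: the largest cost of a player. -/
noncomputable def socialE {V : Type*} [PseudoMetricSpace V] {n m : ℕ}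
    (x : Fin n → V) (t : V) (ord : Fin m → List (Fin n)) (σ : Fin n → Fin m) : ℝ :=
  ⨆ i : Fin n, playerCost x t ord σ i

/-- `σ` is a (pure) Nash equilibrium: no player can decrease her cost by unilaterally
switching to another bus. -/
def isNash {V : Type*} [PseudoMetricSpace V] {n m : ℕ}
    (x : Fin n → V) (t : V) (ord : Fin m → List (Fin n)) (σ : Fin n → Fin m) : Prop :=
  ∀ i : Fin n, ∀ j : Fin m,
    playerCost x t ord σ i ≤ playerCost x t ord (Function.update σ i j) i

/-!
Every player pays at least her distance to `t`, so `∑ᵢ d(xᵢ, t) ≤ U(σ*)`. Conversely, routing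
each leg of a route through `t` bounds it by `d(p, t) + d(q, t)`, so a player's cost is at most
`2 ∑_q d(x_q, t) - d(xᵢ, t)`; summing over the `n` players gives `U(σ) ≤ (2n - 1) ∑ᵢ d(xᵢ, t)`.
-/

section Route

variable {V : Type*} [PseudoMetricSpace V] (t : V)

lemma routeLen_cons (a : V) (l : List V) :
    routeLen t (a :: l) = dist a (l.getD 0 t) + routeLen t l := by
  simp only [routeLen, List.length_cons, Finset.sum_range_succ', List.getD_cons_succ,
    List.getD_cons_zero]
  ring

lemma dist_getD_zero_le_routeLen (l : List V) : dist (l.getD 0 t) t ≤ routeLen t l := by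
  induction l with
  | nil => simp [routeLen]
  | cons a l ih =>
    rw [routeLen_cons, List.getD_cons_zero]
    linarith [dist_triangle a (l.getD 0 t) t]

lemma routeLen_cons_le (a : V) (l : List V) :
    routeLen t (a :: l) ≤ 2 * ((a :: l).map (dist · t)).sum - dist a t := by
  induction l generalizing a with
  | nil => simp [routeLen]; linarith
  | cons b l ih =>
    rw [routeLen_cons, List.getD_cons_zero, List.map_cons, List.sum_cons]
    linarith [ih b, dist_triangle_right a b t]

end Route

lemma List.drop_idxOf_eq_cons {α : Type*} [BEq α] [LawfulBEq α] {l : List α} {a : α}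
    (h : a ∈ l) : l.drop (l.idxOf a) = a :: l.drop (l.idxOf a + 1) := by
  rw [List.drop_eq_getElem_cons (List.idxOf_lt_length_iff.2 h), List.getElem_idxOf]

lemma List.Nodup.sum_map_le_sum_univ {ι : Type*} [Fintype ι] [DecidableEq ι] {l : List ι}
    (hl : l.Nodup) {f : ι → ℝ} (hf : ∀ i, 0 ≤ f i) : (l.map f).sum ≤ ∑ i, f i := by
  rw [← List.sum_toFinset f hl]
  exact Finset.sum_le_univ_sum_of_nonneg hf

section Cost

variable {V : Type*} [PseudoMetricSpace V] {n m : ℕ} (x : Fin n → V) (t : V)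
  {ord : Fin m → List (Fin n)} (σ : Fin n → Fin m)

lemma busRoute_sublist (j : Fin m) : (busRoute ord σ j).Sublist (ord j) :=
  List.filter_sublist

lemma mem_busRoute_self (hord : validOrd ord) (i : Fin n) : i ∈ busRoute ord σ (σ i) := by
  simp [busRoute, (hord (σ i)).2 i]

lemma playerCost_eq_routeLen_cons (hord : validOrd ord) (i : Fin n) :
    playerCost x t ord σ i = routeLen t (x i ::
      ((busRoute ord σ (σ i)).drop ((busRoute ord σ (σ i)).idxOf i + 1)).map x) := by
  rw [playerCost, List.drop_idxOf_eq_cons (mem_busRoute_self σ hord i), List.map_cons]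

lemma dist_le_playerCost (hord : validOrd ord) (i : Fin n) :
    dist (x i) t ≤ playerCost x t ord σ i := by
  simpa [playerCost_eq_routeLen_cons x t σ hord i] using
    dist_getD_zero_le_routeLen t (x i :: _)

lemma playerCost_le (hord : validOrd ord) (i : Fin n) :
    playerCost x t ord σ i ≤ 2 * ∑ q, dist (x q) t - dist (x i) t := by
  set l := busRoute ord σ (σ i)
  have hnodup : (l.drop (l.idxOf i)).Nodup :=
    ((List.drop_sublist _ l).trans (busRoute_sublist σ (σ i))).nodup (hord (σ i)).1
  have hsum : ((l.drop (l.idxOf i)).map fun q => dist (x q) t).sum ≤ ∑ q, dist (x q) t :=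
    hnodup.sum_map_le_sum_univ fun _ => dist_nonneg
  have hmem := mem_busRoute_self σ hord i
  rw [playerCost_eq_routeLen_cons x t σ hord i]
  refine (routeLen_cons_le t (x i) _).trans ?_
  rw [← List.map_cons, ← List.drop_idxOf_eq_cons hmem, List.map_map, Function.comp_def]
  linarith

lemma sum_dist_le_socialU (hord : validOrd ord) :
    ∑ i, dist (x i) t ≤ socialU x t ord σ :=
  Finset.sum_le_sum fun i _ => dist_le_playerCost x t σ hord i

lemma socialU_le (hord : validOrd ord) :
    socialU x t ord σ ≤ (2 * (n : ℝ) - 1) * ∑ i, dist (x i) t := by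
  calc socialU x t ord σ ≤ ∑ i, (2 * ∑ q, dist (x q) t - dist (x i) t) :=
        Finset.sum_le_sum fun i _ => playerCost_le x t σ hord i
    _ = (2 * (n : ℝ) - 1) * ∑ i, dist (x i) t := by
        simp only [Finset.sum_sub_distrib, Finset.sum_const, Finset.card_univ, Fintype.card_fin,
          nsmul_eq_mul]
        ring

end Cost

theorem stmt2_general {V : Type*} [MetricSpace V] {n m : ℕ}
    (x : Fin n → V) (t : V) (ord : Fin m → List (Fin n)) (hord : validOrd ord)
    (σ σstar : Fin n → Fin m) :
    socialU x t ord σ ≤ (2 * (n : ℝ) - 1) * socialU x t ord σstar := by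
  rcases n.eq_zero_or_pos with rfl | hn
  · simp [socialU]
  have hcoeff : (0 : ℝ) ≤ 2 * n - 1 := by
    have : (1 : ℝ) ≤ n := by exact_mod_cast hn
    linarith
  calc socialU x t ord σ ≤ (2 * (n : ℝ) - 1) * ∑ i, dist (x i) t := socialU_le x t σ hord
    _ ≤ (2 * (n : ℝ) - 1) * socialU x t ord σstar :=
        mul_le_mul_of_nonneg_left (sum_dist_le_socialU x t σstar hord) hcoeff

/-- in a metric transportation game with `n` players, for any outcome `σ` and
any outcome `σ*` minimizing the utilitarian social cost `U`, `U(σ) ≤ (2n-1)·U(σ*)`. -/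
theorem stmt2 {V : Type*} [MetricSpace V] {n m : ℕ}
    (x : Fin n → V) (t : V) (ord : Fin m → List (Fin n)) (hord : validOrd ord)
    (σ σstar : Fin n → Fin m)
    (hopt : ∀ σ' : Fin n → Fin m, socialU x t ord σstar ≤ socialU x t ord σ') :
    socialU x t ord σ ≤ (2 * (n : ℝ) - 1) * socialU x t ord σstar :=
  stmt2_general x t ord hord σ σstar
end

section
/- In the metric transportation instance where players L ∪ R are split into k levels per side and every bus's route in the equilibrium outcome alternates between one L-player and one R-player at each of k levels before reaching t, the route length of each bus equals (2k−1)(a² + a) + a², where d(L-player, R-player) = a(a+1), d(R-player, t) = a, d(L-player, t) = a². Hence the egalitarian cost of this outcome is (2k−1)(a²+a) + a², and the ratio of this to the optimal egalitarian cost a² + 2k − 1 tends to 2k as a → ∞. -/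
open Finset

open Filter Topology

section Route

variable {V : Type*} [PseudoMetricSpace V] (t : V) {l : List V} {n : ℕ}

theorem routeLen_eq_sum_add_dist_last (hl : l.length = n + 1) :
    routeLen t l = ∑ i ∈ range n, dist (l.getD i t) (l.getD (i + 1) t) + dist (l.getD n t) t := by
  have hpast : l.getD (n + 1) t = t := List.getD_eq_default _ _ hl.le
  rw [routeLen, hl, sum_range_succ, hpast]

theorem routeLen_eq_of_dist_eq {c e : ℝ} (hl : l.length = n + 1)
    (hedge : ∀ i < n, dist (l.getD i t) (l.getD (i + 1) t) = c)
    (hlast : dist (l.getD n t) t = e) :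
    routeLen t l = n * c + e := by
  rw [routeLen_eq_sum_add_dist_last t hl, hlast,
    sum_congr rfl fun i hi => hedge i (mem_range.mp hi), sum_const, card_range, nsmul_eq_mul]

end Route

theorem tendsto_quadratic_div_quadratic_atTop (c₂ c₁ c₀ d₁ d₀ : ℝ) :
    Tendsto (fun b : ℝ => (c₂ * b ^ 2 + c₁ * b + c₀) / (b ^ 2 + d₁ * b + d₀)) atTop (𝓝 c₂) := by
  let g : ℝ → ℝ := fun x => (c₂ + c₁ * x + c₀ * x ^ 2) / (1 + d₁ * x + d₀ * x ^ 2)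
  have hg : ContinuousAt g 0 := ContinuousAt.div (by fun_prop) (by fun_prop) (by simp)
  have hlim := hg.tendsto.comp tendsto_inv_atTop_zero
  rw [show g 0 = c₂ by simp [g]] at hlim
  refine hlim.congr' ?_
  filter_upwards [eventually_ne_atTop 0] with b hb
  simp only [g, Function.comp_apply]
  field_simp

theorem stmt8_general {V : Type*} [MetricSpace V] (t : V) (k : ℕ) (hk : 1 ≤ k) (a : ℝ)
    (l : List V) (hlen : l.length = 2 * k)
    (hedge : ∀ i : ℕ, i + 1 < 2 * k → dist (l.getD i t) (l.getD (i + 1) t) = a * (a + 1))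
    (hlast : dist (l.getD (2 * k - 1) t) t = a ^ 2) :
    routeLen t l = (2 * (k : ℝ) - 1) * (a ^ 2 + a) + a ^ 2 ∧
    Filter.Tendsto
      (fun b : ℝ => ((2 * (k : ℝ) - 1) * (b ^ 2 + b) + b ^ 2) / (b ^ 2 + 2 * (k : ℝ) - 1))
      Filter.atTop (nhds (2 * (k : ℝ))) := by
  have hlen' : l.length = (2 * k - 1) + 1 := by omega
  constructor
  · rw [routeLen_eq_of_dist_eq t hlen' (fun i hi => hedge i (by omega)) hlast,
      Nat.cast_sub (by omega : 1 ≤ 2 * k)]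
    push_cast
    ring
  · refine (tendsto_quadratic_div_quadratic_atTop (2 * k) (2 * k - 1) 0 0 (2 * k - 1)).congr
      fun b => ?_
    ring

/-- an equilibrium bus route alternating between an `L`-player and an
`R`-player at each of the `k` levels (so `2k` players, consecutive distances `a(a+1)`,
last player at distance `a²` from `t`) has length `(2k-1)(a²+a) + a²`; hence the
egalitarian cost of this outcome is `(2k-1)(a²+a) + a²` and its ratio to the optimal
egalitarian cost `a² + 2k - 1` tends to `2k` as `a → ∞`. -/
theorem stmt8 {V : Type*} [MetricSpace V] (t : V) (k : ℕ) (hk : 1 ≤ k) (a : ℝ) (ha : 1 ≤ a)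
    (l : List V) (hlen : l.length = 2 * k)
    (hedge : ∀ i : ℕ, i + 1 < 2 * k → dist (l.getD i t) (l.getD (i + 1) t) = a * (a + 1))
    (hlast : dist (l.getD (2 * k - 1) t) t = a ^ 2) :
    routeLen t l = (2 * (k : ℝ) - 1) * (a ^ 2 + a) + a ^ 2 ∧
    Filter.Tendsto
      (fun b : ℝ => ((2 * (k : ℝ) - 1) * (b ^ 2 + b) + b ^ 2) / (b ^ 2 + 2 * (k : ℝ) - 1))
      Filter.atTop (nhds (2 * (k : ℝ))) :=
  stmt8_general t k hk a l hlen hedge hlast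
end
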